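/- Let f : [a,b] → ℝ be continuous and monotone (nondecreasing, respectively nonincreasing), and let p ∈ [a,b]. Then the star-shaped envelope of f with respect to p is monotone in the same sense (nondecreasing, respectively nonincreasing) on [a,b]. -/

import Mathlib

/-!
If `g` is a star-shaped minorant of a nondecreasing `f`, then so is its running supremum
`h w = sup {g v | v ≤ w}`: on the side of `p` where `w > p` the star inequality for `h` follows
from that of `g` because `h p ≤ h w`, and on the other side because `h w ≤ h p`. As `h` is
nondecreasing, `g y ≤ h y ≤ h z ≤ starEnv f z` whenever `y ≤ z`. The nonincreasing case follows
by the reflection `x ↦ -x`.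
-/

open Set

noncomputable section

/-- A set `S` is star-shaped with respect to a point `x ∈ S` when, for every `y ∈ S`,
the segment `[x,y]` lies in `S`. -/
def StarShapedWrt {V : Type*} [AddCommGroup V] [Module ℝ V] (S : Set V) (x : V) : Prop :=
  x ∈ S ∧ ∀ y ∈ S, segment ℝ x y ⊆ S

/-- The epigraph of `f : S → ℝ`: `{(y,μ) ∈ S × ℝ : f(y) ≤ μ}`. -/
def Epigraph {V : Type*} (S : Set V) (f : V → ℝ) : Set (V × ℝ) :=
  {p : V × ℝ | p.1 ∈ S ∧ f p.1 ≤ p.2}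

/-- A function `f : S → ℝ` is star-shaped with respect to `x` when its epigraph is
star-shaped with respect to `(x, f(x))`. -/
def StarShapedFunOn {V : Type*} [AddCommGroup V] [Module ℝ V]
    (S : Set V) (x : V) (f : V → ℝ) : Prop :=
  StarShapedWrt (Epigraph S f) (x, f x)

/-- The star-shaped envelope of `f` on `S` with respect to `x`: the pointwise supremum of
all star-shaped (w.r.t. `x`) minorants of `f` on `S`. -/
def starEnv {V : Type*} [AddCommGroup V] [Module ℝ V]
    (S : Set V) (x : V) (f : V → ℝ) : V → ℝ :=
  fun y => sSup {r : ℝ | ∃ g : V → ℝ, StarShapedFunOn S x g ∧ (∀ z ∈ S, g z ≤ f z) ∧ r = g y}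

open scoped Pointwise

section StarShaped

variable {V : Type*} [AddCommGroup V] [Module ℝ V] {S : Set V} {x y : V} {f g : V → ℝ}

theorem starShapedFunOn_iff :
    StarShapedFunOn S x g ↔ x ∈ S ∧ ∀ w ∈ S, ∀ t : ℝ, 0 ≤ t → t ≤ 1 →
      (1 - t) • x + t • w ∈ S ∧ g ((1 - t) • x + t • w) ≤ (1 - t) * g x + t * g w := by
  constructor
  · rintro ⟨⟨hx, -⟩, hg⟩
    refine ⟨hx, fun w hw t ht₀ ht₁ => ?_⟩
    exact hg (w, g w) ⟨hw, le_rfl⟩ ⟨1 - t, t, by linarith, ht₀, by ring, rfl⟩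
  · rintro ⟨hx, hg⟩
    refine ⟨⟨hx, le_rfl⟩, ?_⟩
    rintro ⟨w, μ⟩ ⟨hw, hμ⟩ _ ⟨u, t, hu, ht, hut, rfl⟩
    obtain rfl : u = 1 - t := by linarith
    obtain ⟨hmem, hle⟩ := hg w hw t ht (by linarith)
    refine ⟨hmem, hle.trans ?_⟩
    simp only [Prod.snd_add, Prod.smul_snd, smul_eq_mul]
    gcongr

theorem starShapedFunOn_const (hS : StarConvex ℝ x S) (hx : x ∈ S) (c : ℝ) :
    StarShapedFunOn S x fun _ => c :=
  starShapedFunOn_iff.2 ⟨hx, fun _ hw t ht₀ ht₁ =>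
    ⟨hS hw (by linarith) ht₀ (by ring), by linarith⟩⟩

theorem le_starEnv (hg : StarShapedFunOn S x g) (hgf : ∀ z ∈ S, g z ≤ f z) (hy : y ∈ S) :
    g y ≤ starEnv S x f y :=
  le_csSup ⟨f y, by rintro _ ⟨g', -, hg'f, rfl⟩; exact hg'f y hy⟩ ⟨g, hg, hgf, rfl⟩

theorem StarShapedFunOn.comp_neg (hg : StarShapedFunOn S x g) :
    StarShapedFunOn (-S) (-x) fun v => g (-v) := by
  obtain ⟨hx, hg⟩ := starShapedFunOn_iff.1 hg
  refine starShapedFunOn_iff.2 ⟨by simpa, fun w hw t ht₀ ht₁ => ?_⟩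
  simpa [smul_neg, neg_add, add_comm] using hg (-w) hw t ht₀ ht₁

theorem starEnv_comp_neg (y : V) :
    starEnv (-S) (-x) (fun v => f (-v)) y = starEnv S x f (-y) := by
  unfold starEnv
  congr 1
  ext r
  constructor
  · rintro ⟨g, hg, hgf, rfl⟩
    exact ⟨fun v => g (-v), by simpa using hg.comp_neg,
      fun z hz => by simpa using hgf (-z) (by simpa), by simp⟩
  · rintro ⟨g, hg, hgf, rfl⟩
    exact ⟨fun v => g (-v), hg.comp_neg, fun z hz => hgf (-z) hz, rfl⟩

end StarShaped

def runningSup (S : Set ℝ) (g : ℝ → ℝ) (w : ℝ) : ℝ :=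
  sSup (g '' (S ∩ Iic w))

section RunningSup

variable {S : Set ℝ} {g : ℝ → ℝ} {p v w c : ℝ}

theorem le_runningSup (hbdd : BddAbove (g '' (S ∩ Iic w))) (hv : v ∈ S) (hvw : v ≤ w) :
    g v ≤ runningSup S g w :=
  le_csSup hbdd ⟨v, ⟨hv, hvw⟩, rfl⟩

theorem runningSup_le (hw : w ∈ S) (h : ∀ v ∈ S, v ≤ w → g v ≤ c) : runningSup S g w ≤ c :=
  csSup_le ⟨g w, w, ⟨hw, self_mem_Iic⟩, rfl⟩ (by rintro _ ⟨v, ⟨hv, hvw⟩, rfl⟩; exact h v hv hvw)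

theorem monotoneOn_runningSup (hbdd : ∀ w ∈ S, BddAbove (g '' (S ∩ Iic w))) :
    MonotoneOn (runningSup S g) S :=
  fun _ hv _ hw hvw => runningSup_le hv fun _ hu huv => le_runningSup (hbdd _ hw) hu (huv.trans hvw)

theorem StarShapedFunOn.runningSup (hg : StarShapedFunOn S p g)
    (hbdd : ∀ w ∈ S, BddAbove (g '' (S ∩ Iic w))) :
    StarShapedFunOn S p (runningSup S g) := by
  obtain ⟨hp, hg⟩ := starShapedFunOn_iff.1 hg
  simp only [smul_eq_mul] at hg
  set h := _root_.runningSup S g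
  have hgh : ∀ v ∈ S, g v ≤ h v := fun v hv => le_runningSup (hbdd v hv) hv le_rfl
  refine starShapedFunOn_iff.2 ⟨hp, fun w hw t ht₀ ht₁ => ?_⟩
  simp only [smul_eq_mul]
  obtain ⟨hq, -⟩ := hg w hw t ht₀ ht₁
  refine ⟨hq, runningSup_le hq fun v hv hvq => ?_⟩
  by_cases hlow : v ≤ p ∧ v ≤ w
  · have hvp := le_runningSup (hbdd p hp) hv hlow.1
    have hvw := le_runningSup (hbdd w hw) hv hlow.2
    nlinarith
  · have hqseg : (1 - t) * p + t * w ∈ segment ℝ p w := by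
      rw [segment_eq_image]
      exact ⟨t, ⟨ht₀, ht₁⟩, by simp⟩
    have hvseg : v ∈ segment ℝ p w := by
      rw [segment_eq_uIcc] at hqseg ⊢
      rw [not_and_or, not_le, not_le] at hlow
      refine ⟨?_, hvq.trans hqseg.2⟩
      rcases hlow with hpv | hwv
      · exact (min_le_left _ _).trans hpv.le
      · exact (min_le_right _ _).trans hwv.le
    obtain ⟨s, ⟨hs₀, hs₁⟩, rfl⟩ := (segment_eq_image ℝ p w).subset hvseg
    simp only [smul_eq_mul] at hv hvq ⊢
    have hstar := (hg w hw s hs₀ hs₁).2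
    have hcomb : (1 - s) * g p + s * g w ≤ (1 - s) * h p + s * h w := by
      have : 0 ≤ 1 - s := by linarith
      gcongr
      exacts [hgh p hp, hgh w hw]
    -- as `h` is monotone, `(1 - s) * h p + s * h w` grows with the point `(1 - s) * p + s * w`
    have hsq : (s - t) * (h w - h p) ≤ 0 := by
      rcases lt_trichotomy p w with hpw | rfl | hwp
      · have := monotoneOn_runningSup hbdd hp hw hpw.le
        nlinarith
      · simp
      · have := monotoneOn_runningSup hbdd hw hp hwp.le
        nlinarith
    linarith

end RunningSup

section Envelope

variable {S : Set ℝ} {p : ℝ} {f : ℝ → ℝ}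

theorem starEnv_monotoneOn (hf : MonotoneOn f S)
    (hex : ∃ g, StarShapedFunOn S p g ∧ ∀ z ∈ S, g z ≤ f z) :
    MonotoneOn (starEnv S p f) S := by
  intro y hy z hz hyz
  obtain ⟨g₀, hg₀, hg₀f⟩ := hex
  refine csSup_le ⟨_, g₀, hg₀, hg₀f, rfl⟩ ?_
  rintro _ ⟨g, hg, hgf, rfl⟩
  have hgf' : ∀ w ∈ S, ∀ v ∈ S, v ≤ w → g v ≤ f w :=
    fun w hw v hv hvw => (hgf v hv).trans (hf hv hw hvw)
  have hbdd : ∀ w ∈ S, BddAbove (g '' (S ∩ Iic w)) :=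
    fun w hw => ⟨f w, by rintro _ ⟨v, ⟨hv, hvw⟩, rfl⟩; exact hgf' w hw v hv hvw⟩
  calc g y ≤ runningSup S g y := le_runningSup (hbdd y hy) hy le_rfl
    _ ≤ runningSup S g z := monotoneOn_runningSup hbdd hy hz hyz
    _ ≤ starEnv S p f z :=
      le_starEnv (hg.runningSup hbdd) (fun w hw => runningSup_le hw (hgf' w hw)) hz

theorem starEnv_antitoneOn (hf : AntitoneOn f S)
    (hex : ∃ g, StarShapedFunOn S p g ∧ ∀ z ∈ S, g z ≤ f z) :
    AntitoneOn (starEnv S p f) S := by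
  obtain ⟨g, hg, hgf⟩ := hex
  have hmono : MonotoneOn (starEnv (-S) (-p) fun v => f (-v)) (-S) :=
    starEnv_monotoneOn (fun _ hv _ hw hvw => hf hw hv (neg_le_neg hvw))
      ⟨_, hg.comp_neg, fun z hz => hgf (-z) hz⟩
  intro y hy z hz hyz
  simpa [starEnv_comp_neg] using
    hmono (neg_mem_neg.2 hz) (neg_mem_neg.2 hy) (neg_le_neg hyz)

end Envelope

theorem star_envelope_monotone_general
    (a b : ℝ) (p : ℝ) (hp : p ∈ Set.Icc a b)
    (f : ℝ → ℝ) :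
    (MonotoneOn f (Set.Icc a b) →
      MonotoneOn (starEnv (Set.Icc a b) p f) (Set.Icc a b)) ∧
    (AntitoneOn f (Set.Icc a b) →
      AntitoneOn (starEnv (Set.Icc a b) p f) (Set.Icc a b)) := by
  have hS : StarConvex ℝ p (Icc a b) := (convex_Icc a b).starConvex hp
  have ha : a ∈ Icc a b := left_mem_Icc.2 (hp.1.trans hp.2)
  have hb : b ∈ Icc a b := right_mem_Icc.2 (hp.1.trans hp.2)
  exact ⟨fun hf => starEnv_monotoneOn hf
      ⟨_, starShapedFunOn_const hS hp (f a), fun z hz => hf ha hz hz.1⟩,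
    fun hf => starEnv_antitoneOn hf
      ⟨_, starShapedFunOn_const hS hp (f b), fun z hz => hf hz hb hz.2⟩⟩

/-- **The star-shaped envelope of a monotone function is monotone** (in the same
sense: nondecreasing, respectively nonincreasing). -/
theorem star_envelope_monotone
    (a b : ℝ) (hab : a ≤ b) (p : ℝ) (hp : p ∈ Set.Icc a b)
    (f : ℝ → ℝ) (hf : ContinuousOn f (Set.Icc a b)) :
    (MonotoneOn f (Set.Icc a b) →
      MonotoneOn (starEnv (Set.Icc a b) p f) (Set.Icc a b)) ∧
    (AntitoneOn f (Set.Icc a b) →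
      AntitoneOn (starEnv (Set.Icc a b) p f) (Set.Icc a b)) :=
  star_envelope_monotone_general a b p hp f
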